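/- Suppose b divides a. Let q be a rational number with 1 - a·q - b·q² ≠ 0. Then f(q) = q/(1 - a·q - b·q²) is an integer if and only if q = F_i/F_{i+1} for some natural number i, or q = -F_{i+1}/(b·F_i) for some positive integer i. -/

import Mathlib

/-- The integer sequence `F_i`: `F_0 = 0`, `F_1 = 1`, `F_{i+2} = a·F_{i+1} + b·F_i`. -/
def intF (a b : ℤ) : ℕ → ℤ
  | 0 => 0
  | 1 => 1
  | n + 2 => a * intF a b (n + 1) + b * intF a b n

lemma intF_base (a b : ℤ) (ha : 0 < a) (hb : 0 < b) :
    ∀ i, 0 ≤ intF a b i ∧ 0 < intF a b (i + 1) := by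
  intro i
  induction i with
  | zero => simp [intF]
  | succ n ih =>
    refine ⟨le_of_lt ih.2, ?_⟩
    show 0 < a * intF a b (n + 1) + b * intF a b n
    have h1 := ih.1; have h2 := ih.2
    positivity

lemma intF_pos (a b : ℤ) (ha : 0 < a) (hb : 0 < b) (i : ℕ) : 0 < intF a b (i + 1) :=
  (intF_base a b ha hb i).2

lemma intF_identity (a b : ℤ) : ∀ i : ℕ,
    intF a b (i + 1) ^ 2 - a * intF a b i * intF a b (i + 1) - b * intF a b i ^ 2 = (-b) ^ i := by
  intro i
  induction i with
  | zero => simp [intF]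
  | succ n ih =>
    have h2 : intF a b (n + 2) = a * intF a b (n + 1) + b * intF a b n := rfl
    rw [pow_succ, h2]
    linear_combination (-b) * ih

lemma exists_int_div {x y : ℤ} (hy : y ≠ 0) :
    (∃ k : ℤ, (x : ℚ) / (y : ℚ) = (k : ℚ)) ↔ y ∣ x := by
  have hy' : (y : ℚ) ≠ 0 := Int.cast_ne_zero.mpr hy
  constructor
  · rintro ⟨k, hk⟩
    have : (x : ℚ) = (y : ℚ) * k := by
      field_simp at hk
      linarith [hk]
    exact ⟨k, by exact_mod_cast this⟩
  · rintro ⟨c, rfl⟩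
    exact ⟨c, by push_cast; field_simp⟩

lemma num_eq (q : ℚ) : (q.num : ℚ) = q * (q.den : ℚ) := by
  have hd : ((q.den : ℚ)) ≠ 0 := by exact_mod_cast q.den_nz
  exact (div_eq_iff hd).mp (Rat.num_div_den q)

lemma den_expr (a b : ℤ) (q : ℚ) :
    1 - (a : ℚ) * q - (b : ℚ) * q ^ 2
      = (((q.den : ℤ) ^ 2 - a * q.num * q.den - b * q.num ^ 2 : ℤ) : ℚ) / ((q.den : ℚ)) ^ 2 := by
  have hd : ((q.den : ℚ)) ≠ 0 := by exact_mod_cast q.den_nz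
  rw [eq_div_iff (by positivity)]
  push_cast
  rw [num_eq q]
  ring

lemma f_formula (a b : ℤ) (q : ℚ) :
    q / (1 - (a : ℚ) * q - (b : ℚ) * q ^ 2)
      = ((q.num * q.den : ℤ) : ℚ)
        / (((q.den : ℤ) ^ 2 - a * q.num * q.den - b * q.num ^ 2 : ℤ) : ℚ) := by
  have hd : ((q.den : ℚ)) ≠ 0 := by exact_mod_cast q.den_nz
  rw [den_expr a b q, div_div_eq_mul_div]
  congr 1
  push_cast
  rw [num_eq q]
  ring

lemma D_ne_zero (a b : ℤ) (q : ℚ) (hden : 1 - (a : ℚ) * q - (b : ℚ) * q ^ 2 ≠ 0) :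
    ((q.den : ℤ) ^ 2 - a * q.num * q.den - b * q.num ^ 2) ≠ 0 := by
  intro h
  apply hden
  rw [den_expr a b q, h]
  simp

lemma descent (a b : ℤ) (ha : 0 < a) (hb : 0 < b) (hba : b ∣ a) :
    ∀ N : ℕ, ∀ q : ℚ, q.den ≤ N → 0 < q →
      1 - (a : ℚ) * q - (b : ℚ) * q ^ 2 ≠ 0 →
      (∃ k : ℤ, q / (1 - (a : ℚ) * q - (b : ℚ) * q ^ 2) = (k : ℚ)) →
      ∃ i : ℕ, q = (intF a b i : ℚ) / (intF a b (i + 1) : ℚ) := by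
  intro N
  induction N with
  | zero => intro q hle _ _ _; exact absurd (Nat.le_trans q.pos hle) (by simp)
  | succ N ih =>
    intro q hle hqpos hden hint
    set m := q.num with hm_def
    set n := (q.den : ℤ) with hn_def
    have hm : 0 < m := Rat.num_pos.mpr hqpos
    have hn : 0 < n := by rw [hn_def]; exact_mod_cast q.pos
    have hcast : ((q.den : ℕ) : ℚ) = ((n : ℤ) : ℚ) := by rw [hn_def]; simp
    have hcop : IsCoprime m n := by
      rw [Int.isCoprime_iff_gcd_eq_one]
      exact q.reduced
    set D := n ^ 2 - a * m * n - b * m ^ 2 with hD_def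
    have hD0 : D ≠ 0 := D_ne_zero a b q hden
    have hdvd_mn : D ∣ m * n := by
      rw [← exists_int_div hD0, ← f_formula a b q]
      exact hint
    have hcopDm : IsCoprime D m := by
      have h1 : IsCoprime (n ^ 2) m := hcop.symm.pow_left
      have h2 := h1.add_mul_left_left (-(a * n) - b * m)
      have h3 : D = n ^ 2 + m * (-(a * n) - b * m) := by rw [hD_def]; ring
      rw [h3]; exact h2
    have hDn : D ∣ n := hcopDm.dvd_of_dvd_mul_left hdvd_mn
    have hDb : D ∣ b := by
      have h1 : D ∣ b * m ^ 2 := by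
        have he : b * m ^ 2 = n * n - a * m * n - D := by rw [hD_def]; ring
        rw [he]
        exact dvd_sub (dvd_sub (hDn.mul_left n) (hDn.mul_left (a * m))) dvd_rfl
      exact (hcopDm.pow_right).dvd_of_dvd_mul_right h1
    have habs : -b ≤ D ∧ D ≤ b := abs_le.mp (Int.le_of_dvd hb ((abs_dvd _ _).mpr hDb))
    have habs1 : -b ≤ n ^ 2 - a * m * n - b * m ^ 2 := by rw [← hD_def]; exact habs.1
    by_cases hmn : n ≤ m
    · -- forces a = m = n = 1
      have hbm2 : b * m ^ 2 ≤ b := by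
        nlinarith [habs1,
          mul_nonneg (mul_nonneg (show (0:ℤ) ≤ a - 1 by omega) hm.le) hn.le,
          mul_nonneg (show (0:ℤ) ≤ m - n by omega) hn.le]
      have hm1 : m = 1 := by
        by_contra h
        have h2 : 2 ≤ m := by omega
        have h3 : (4:ℤ) ≤ m ^ 2 := by nlinarith
        have h4 : b * 4 ≤ b * m ^ 2 := by nlinarith
        linarith
      have hn1 : n = 1 := by omega
      have hDval : D = 1 - a - b := by rw [hD_def, hm1, hn1]; ring
      have ha1 : a = 1 := by omega
      refine ⟨1, ?_⟩
      have hq1 : q = 1 := by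
        rw [← Rat.num_div_den q, hcast, ← hm_def, hm1, hn1]; norm_num
      have hF2 : intF a b 2 = a := by simp [intF]
      rw [hq1, show intF a b 1 = 1 from rfl, hF2, ha1]
      norm_num
    · push_neg at hmn
      set t := n - a * m with ht_def
      rcases lt_trichotomy t 0 with htneg | ht0 | htpos
      · exfalso
        have hDt : D = n * t - b * m ^ 2 := by rw [hD_def, ht_def]; ring
        have h2 : 2 ≤ n := by omega
        have h3 : n * t ≤ -n := by nlinarith [mul_le_mul_of_nonneg_left (show t ≤ -1 by omega) hn.le]
        have h4 : b ≤ b * m ^ 2 := by nlinarith [mul_le_mul_of_nonneg_left (show (1:ℤ) ≤ m ^ 2 by nlinarith) hb.le]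
        linarith [habs.1]
      · have hn_eq : n = a * m := by omega
        have hmdvd : m ∣ n := ⟨a, by rw [hn_eq]; ring⟩
        have hmu : IsUnit m := hcop.isUnit_of_dvd' dvd_rfl hmdvd
        have hm1 : m = 1 := by rcases Int.isUnit_iff.mp hmu with h | h <;> omega
        have hna : n = a := by rw [hn_eq, hm1, mul_one]
        refine ⟨1, ?_⟩
        have hF2 : intF a b 2 = a := by simp [intF]
        rw [← Rat.num_div_den q, hcast, ← hm_def, hm1, hna,
          show intF a b 1 = 1 from rfl, hF2]
      · -- descent step
        have hbm : (0 : ℤ) < b * m := by positivity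
        set q' : ℚ := ((t : ℤ) : ℚ) / ((b * m : ℤ) : ℚ) with hq'_def
        have htq : ((t : ℤ) : ℚ) ≠ 0 := Int.cast_ne_zero.mpr (by omega)
        have hbmq : ((b * m : ℤ) : ℚ) ≠ 0 := Int.cast_ne_zero.mpr (by omega)
        have hq'pos : 0 < q' := by
          rw [hq'_def]
          apply div_pos <;> exact_mod_cast (by omega : (0:ℤ) < _)
        have hq'val : 1 - (a : ℚ) * q' - (b : ℚ) * q' ^ 2 = ((-D : ℤ) : ℚ) / ((b * m ^ 2 : ℤ) : ℚ) := by
          rw [hq'_def, ht_def, hD_def]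
          rw [eq_div_iff (by exact_mod_cast (by positivity : ((b * m ^ 2 : ℤ)) ≠ 0))]
          push_cast
          field_simp
          ring
        have hden' : 1 - (a : ℚ) * q' - (b : ℚ) * q' ^ 2 ≠ 0 := by
          rw [hq'val]
          apply div_ne_zero
          · exact Int.cast_ne_zero.mpr (by omega)
          · exact Int.cast_ne_zero.mpr (by positivity)
        have hint' : ∃ k : ℤ, q' / (1 - (a : ℚ) * q' - (b : ℚ) * q' ^ 2) = (k : ℚ) := by
          have hval : q' / (1 - (a : ℚ) * q' - (b : ℚ) * q' ^ 2)
              = ((t * m : ℤ) : ℚ) / ((-D : ℤ) : ℚ) := by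
            rw [hq'val, hq'_def, div_div_eq_mul_div]
            congr 1
            push_cast
            field_simp
          rw [hval, exists_int_div (by omega : (-D : ℤ) ≠ 0)]
          rw [neg_dvd]
          have h1 : t * m = m * n - a * m ^ 2 := by rw [ht_def]; ring
          rw [h1]
          exact dvd_sub hdvd_mn ((hDb.trans hba).mul_right (m ^ 2))
        have hle' : q'.den ≤ N := by
          have hdvd : (q'.den : ℤ) ∣ b * m := by
            have h := Rat.den_dvd (t : ℤ) (b * m : ℤ)
            rw [Rat.divInt_eq_div, ← hq'_def] at h
            exact h
          have h1 : (q'.den : ℤ) ≤ b * m := Int.le_of_dvd hbm hdvd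
          have hba' : b ≤ a := Int.le_of_dvd ha hba
          have h2 : b * m ≤ a * m := by nlinarith
          have h3 : a * m < n := by omega
          have h4 : n ≤ (N : ℤ) + 1 := by rw [hn_def]; exact_mod_cast hle
          omega
        obtain ⟨i, hq'eq⟩ := ih q' hle' hq'pos hden' hint'
        refine ⟨i + 1, ?_⟩
        show q = (intF a b (i + 1) : ℚ) / (intF a b (i + 2) : ℚ)
        have hF1 : (0 : ℤ) < intF a b (i + 1) := intF_pos a b ha hb i
        have hF2 : (0 : ℤ) < intF a b (i + 2) := intF_pos a b ha hb (i + 1)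
        have hF1Q : ((intF a b (i + 1) : ℤ) : ℚ) ≠ 0 := Int.cast_ne_zero.mpr (by omega)
        have hF2Q : ((intF a b (i + 2) : ℤ) : ℚ) ≠ 0 := Int.cast_ne_zero.mpr (by omega)
        have hrel : q * ((a : ℚ) + b * q') = 1 := by
          rw [hq'_def, ht_def]
          nth_rewrite 1 [← Rat.num_div_den q]
          rw [hcast]
          have hmq : ((m : ℤ) : ℚ) ≠ 0 := Int.cast_ne_zero.mpr (by omega)
          have hnq : ((n : ℤ) : ℚ) ≠ 0 := Int.cast_ne_zero.mpr (by omega)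
          push_cast
          field_simp
          ring
        rw [hq'eq] at hrel
        have hF2eq : ((intF a b (i + 2) : ℤ) : ℚ)
            = a * intF a b (i + 1) + b * intF a b i := by
          rw [show intF a b (i + 2) = a * intF a b (i + 1) + b * intF a b i from rfl]
          push_cast
          ring
        rw [eq_div_iff hF2Q, hF2eq]
        field_simp at hrel
        linear_combination hrel

lemma intF_pow_dvd (a b : ℤ) (hba : b ∣ a) :
    ∀ i : ℕ, b ^ (i / 2) ∣ intF a b i ∧ b ^ ((i + 1) / 2) ∣ intF a b (i + 1) := by
  intro i
  induction i with
  | zero => simp [intF]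
  | succ n ih =>
    refine ⟨ih.2, ?_⟩
    show b ^ ((n + 2) / 2) ∣ a * intF a b (n + 1) + b * intF a b n
    have he : (n + 2) / 2 = n / 2 + 1 := by omega
    rw [he]
    refine dvd_add ?_ ?_
    · have := mul_dvd_mul hba ((pow_dvd_pow b (show n / 2 ≤ (n + 1) / 2 by omega)).trans ih.2)
      rwa [pow_succ, mul_comm (b ^ (n / 2)) b]
    · rw [pow_succ, mul_comm]
      exact mul_dvd_mul dvd_rfl ih.1

lemma intF_pow_dvd_mul (a b : ℤ) (hba : b ∣ a) (i : ℕ) :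
    b ^ i ∣ intF a b i * intF a b (i + 1) := by
  have h := intF_pow_dvd a b hba i
  have : b ^ (i / 2) * b ^ ((i + 1) / 2) ∣ intF a b i * intF a b (i + 1) :=
    mul_dvd_mul h.1 h.2
  rwa [← pow_add, show i / 2 + (i + 1) / 2 = i by omega] at this


lemma symm_f (a b : ℤ) (hb : (b : ℚ) ≠ 0) (q : ℚ) (hq : q ≠ 0)
    (hden : 1 - (a : ℚ) * q - (b : ℚ) * q ^ 2 ≠ 0) :
    (1 - (a : ℚ) * (-1 / (b * q)) - (b : ℚ) * (-1 / (b * q)) ^ 2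
        = -((1 - (a : ℚ) * q - (b : ℚ) * q ^ 2)) / ((b : ℚ) * q ^ 2)) ∧
      (-1 / ((b : ℚ) * q)) / (1 - (a : ℚ) * (-1 / (b * q)) - (b : ℚ) * (-1 / (b * q)) ^ 2)
        = q / (1 - (a : ℚ) * q - (b : ℚ) * q ^ 2) := by
  have h1 : 1 - (a : ℚ) * (-1 / (b * q)) - (b : ℚ) * (-1 / (b * q)) ^ 2
      = -((1 - (a : ℚ) * q - (b : ℚ) * q ^ 2)) / ((b : ℚ) * q ^ 2) := by
    field_simp
    ring
  refine ⟨h1, ?_⟩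
  rw [h1, div_div_eq_mul_div, div_eq_div_iff (neg_ne_zero.mpr hden) hden]
  field_simp

lemma forward_pos (a b : ℤ) (ha : 0 < a) (hb : 0 < b) (hba : b ∣ a) (i : ℕ) :
    (1 - (a : ℚ) * ((intF a b i : ℚ) / (intF a b (i + 1) : ℚ))
        - (b : ℚ) * ((intF a b i : ℚ) / (intF a b (i + 1) : ℚ)) ^ 2 ≠ 0) ∧
    ∃ k : ℤ, ((intF a b i : ℚ) / (intF a b (i + 1) : ℚ)) /
        (1 - (a : ℚ) * ((intF a b i : ℚ) / (intF a b (i + 1) : ℚ))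
          - (b : ℚ) * ((intF a b i : ℚ) / (intF a b (i + 1) : ℚ)) ^ 2) = (k : ℚ) := by
  have hF1 : (0 : ℤ) < intF a b (i + 1) := intF_pos a b ha hb i
  have hFQ : ((intF a b (i + 1) : ℤ) : ℚ) ≠ 0 := Int.cast_ne_zero.mpr (by omega)
  have hbZ : ((-b) ^ i : ℤ) ≠ 0 := pow_ne_zero _ (by omega)
  have hbQ : ((((-b) ^ i : ℤ)) : ℚ) ≠ 0 := Int.cast_ne_zero.mpr hbZ
  have key : ((intF a b (i + 1) : ℤ) : ℚ) ^ 2 - (a : ℚ) * (intF a b i : ℚ) * (intF a b (i + 1) : ℚ)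
      - (b : ℚ) * ((intF a b i : ℚ)) ^ 2 = (((-b) ^ i : ℤ) : ℚ) := by
    exact_mod_cast intF_identity a b i
  have hval : 1 - (a : ℚ) * ((intF a b i : ℚ) / (intF a b (i + 1) : ℚ))
      - (b : ℚ) * ((intF a b i : ℚ) / (intF a b (i + 1) : ℚ)) ^ 2
      = (((-b) ^ i : ℤ) : ℚ) / ((intF a b (i + 1) : ℚ)) ^ 2 := by
    rw [eq_div_iff (pow_ne_zero 2 hFQ), ← key]
    field_simp
  refine ⟨by rw [hval]; exact div_ne_zero hbQ (pow_ne_zero 2 hFQ), ?_⟩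
  have hval2 : ((intF a b i : ℚ) / (intF a b (i + 1) : ℚ)) /
      (1 - (a : ℚ) * ((intF a b i : ℚ) / (intF a b (i + 1) : ℚ))
        - (b : ℚ) * ((intF a b i : ℚ) / (intF a b (i + 1) : ℚ)) ^ 2)
      = ((intF a b i * intF a b (i + 1) : ℤ) : ℚ) / ((((-b) ^ i : ℤ)) : ℚ) := by
    rw [hval, div_div_eq_mul_div]
    congr 1
    push_cast
    field_simp
  rw [hval2, exists_int_div hbZ]
  rcases Nat.even_or_odd i with he | ho
  · rw [he.neg_pow]
    exact intF_pow_dvd_mul a b hba i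
  · rw [ho.neg_pow, neg_dvd]
    exact intF_pow_dvd_mul a b hba i

theorem integrality_of_f_at_rationals
    (a b : ℤ) (ha : 0 < a) (hb : 0 < b) (hba : b ∣ a) (q : ℚ)
    (hden : 1 - (a : ℚ) * q - (b : ℚ) * q ^ 2 ≠ 0) :
    (∃ k : ℤ, q / (1 - (a : ℚ) * q - (b : ℚ) * q ^ 2) = (k : ℚ)) ↔
      ((∃ i : ℕ, q = (intF a b i : ℚ) / (intF a b (i + 1) : ℚ)) ∨
        (∃ i : ℕ, 0 < i ∧ q = -((intF a b (i + 1) : ℚ) / ((b : ℚ) * (intF a b i : ℚ))))) := by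
  have hbQ : (b : ℚ) ≠ 0 := Int.cast_ne_zero.mpr hb.ne'
  constructor
  · rintro ⟨k, hk⟩
    rcases lt_trichotomy q 0 with hneg | h0 | hpos
    · right
      have hq0 : q ≠ 0 := ne_of_lt hneg
      obtain ⟨h1, h2⟩ := symm_f a b hbQ q hq0 hden
      set q2 : ℚ := -1 / ((b : ℚ) * q) with hq2
      have hbq : (b : ℚ) * q < 0 := mul_neg_of_pos_of_neg (by exact_mod_cast hb) hneg
      have hq2pos : 0 < q2 := by
        rw [hq2]
        exact div_pos_of_neg_of_neg (by norm_num) hbq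
      have hden2 : 1 - (a : ℚ) * q2 - (b : ℚ) * q2 ^ 2 ≠ 0 := by
        rw [hq2, h1]
        exact div_ne_zero (neg_ne_zero.mpr hden) (mul_ne_zero hbQ (pow_ne_zero 2 hq0))
      have hint2 : ∃ k : ℤ, q2 / (1 - (a : ℚ) * q2 - (b : ℚ) * q2 ^ 2) = (k : ℚ) :=
        ⟨k, by rw [hq2, h2]; exact hk⟩
      obtain ⟨i, hieq⟩ := descent a b ha hb hba q2.den q2 le_rfl hq2pos hden2 hint2
      have hi : i ≠ 0 := by
        rintro rfl
        rw [hieq] at hq2pos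
        simp [intF] at hq2pos
      obtain ⟨j, rfl⟩ : ∃ j, i = j + 1 := ⟨i - 1, by omega⟩
      refine ⟨j + 1, by omega, ?_⟩
      have hFj1 : (0 : ℤ) < intF a b (j + 1) := intF_pos a b ha hb j
      have hFj2 : (0 : ℤ) < intF a b (j + 1 + 1) := intF_pos a b ha hb (j + 1)
      have hFj1Q : ((intF a b (j + 1) : ℤ) : ℚ) ≠ 0 := Int.cast_ne_zero.mpr (by omega)
      have hFj2Q : ((intF a b (j + 1 + 1) : ℤ) : ℚ) ≠ 0 := Int.cast_ne_zero.mpr (by omega)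
      have hself : q = -1 / ((b : ℚ) * q2) := by
        rw [hq2]
        field_simp
      rw [hself, hieq]
      field_simp
    · left
      exact ⟨0, by rw [h0]; simp [intF]⟩
    · left
      exact descent a b ha hb hba q.den q le_rfl hpos hden ⟨k, hk⟩
  · rintro (⟨i, rfl⟩ | ⟨i, hipos, rfl⟩)
    · exact (forward_pos a b ha hb hba i).2
    · obtain ⟨j, rfl⟩ : ∃ j, i = j + 1 := ⟨i - 1, by omega⟩
      obtain ⟨hden0, k, hk⟩ := forward_pos a b ha hb hba (j + 1)
      have hFj1 : (0 : ℤ) < intF a b (j + 1) := intF_pos a b ha hb j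
      have hFj2 : (0 : ℤ) < intF a b (j + 1 + 1) := intF_pos a b ha hb (j + 1)
      have hFj1Q : ((intF a b (j + 1) : ℤ) : ℚ) ≠ 0 := Int.cast_ne_zero.mpr (by omega)
      have hFj2Q : ((intF a b (j + 1 + 1) : ℤ) : ℚ) ≠ 0 := Int.cast_ne_zero.mpr (by omega)
      have hq0ne : (intF a b (j + 1) : ℚ) / (intF a b (j + 1 + 1) : ℚ) ≠ 0 :=
        div_ne_zero hFj1Q hFj2Q
      obtain ⟨hs1, hs2⟩ := symm_f a b hbQ _ hq0ne hden0
      have heq : -(((intF a b (j + 1 + 1) : ℤ) : ℚ) / ((b : ℚ) * (intF a b (j + 1) : ℚ)))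
          = -1 / ((b : ℚ) * ((intF a b (j + 1) : ℚ) / (intF a b (j + 1 + 1) : ℚ))) := by
        field_simp
      rw [heq, hs2]
      exact ⟨k, hk⟩
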